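/- Let η₁ ~ Beta(a₁,a₂), η₂ ~ Beta(b₁,b₂), η₃ ~ Beta(a₁+a₂, b₁+b₂) be independent, with all parameters positive. Then π = η₃η₁ + (1-η₃)η₂ has distribution Beta(a₁+b₁, a₂+b₂). -/

import Mathlib

open MeasureTheory Set

/-- The Beta(a, b) distribution on ℝ, with density `x^(a-1) (1-x)^(b-1) / B(a,b)` on `(0,1)`,
where `B(a,b) = Γ(a)Γ(b)/Γ(a+b)`. -/
noncomputable def betaMeasure (a b : ℝ) : Measure ℝ :=
  volume.withDensity ((Ioo (0:ℝ) 1).indicator fun x =>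
    ENNReal.ofReal (x ^ (a - 1) * (1 - x) ^ (b - 1) *
      (Real.Gamma (a + b) / (Real.Gamma a * Real.Gamma b))))

/-!
All three variables live in `[0, 1]`, so their laws are determined by their moments
(Weierstrass approximation). By independence and the binomial theorem,
`E[πⁿ] = ∑_{i+j=n} C(n,i) E[η₁ⁱ] E[η₂ʲ] E[η₃ⁱ (1-η₃)ʲ]`. Each Beta moment is a ratio of rising
factorials, `E[ηⁱ(1-η)ʲ] = (a)ᵢ (b)ⱼ / (a+b)ᵢ₊ⱼ` for `η ~ Beta(a,b)`; the factors `(a₁+a₂)ᵢ` and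
`(b₁+b₂)ⱼ` contributed by `η₃` cancel the denominators of the moments of `η₁` and `η₂`, and the
Vandermonde identity `(x+y)ₙ = ∑_{i+j=n} C(n,i) (x)ᵢ (y)ⱼ` for rising factorials leaves
`(a₁+b₁)ₙ / (a₁+a₂+b₁+b₂)ₙ`, the `n`-th moment of `Beta(a₁+b₁, a₂+b₂)`.
-/

open Polynomial

section Pochhammer

open Finset

theorem ascPochhammer_eval_add {R : Type*} [CommSemiring R] (x y : R) (n : ℕ) :
    (ascPochhammer R n).eval (x + y) = ∑ ij ∈ antidiagonal n,
      n.choose ij.1 * ((ascPochhammer R ij.1).eval x * (ascPochhammer R ij.2).eval y) := by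
  induction n with
  | zero => simp
  | succ n ih =>
    rw [sum_antidiagonal_choose_succ_mul
      (fun i j => (ascPochhammer R i).eval x * (ascPochhammer R j).eval y),
      ← sum_add_distrib, ascPochhammer_succ_eval, ih, sum_mul]
    refine sum_congr rfl fun ij hij => ?_
    rw [HasAntidiagonal.mem_antidiagonal] at hij
    rw [Nat.choose_symm_of_eq_add hij.symm, ascPochhammer_succ_eval, ascPochhammer_succ_eval,
      ← hij]
    push_cast
    ring

theorem sum_antidiagonal_choose_mul_ascPochhammer_div {x y A B : ℝ} (hA : 0 < A) (hB : 0 < B)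
    (n : ℕ) :
    ∑ ij ∈ antidiagonal n, n.choose ij.1 *
      ((ascPochhammer ℝ ij.1).eval x / (ascPochhammer ℝ ij.1).eval A *
        ((ascPochhammer ℝ ij.2).eval y / (ascPochhammer ℝ ij.2).eval B *
          ((ascPochhammer ℝ ij.1).eval A * (ascPochhammer ℝ ij.2).eval B /
            (ascPochhammer ℝ (ij.1 + ij.2)).eval (A + B)))) =
      (ascPochhammer ℝ n).eval (x + y) / (ascPochhammer ℝ n).eval (A + B) := by
  rw [ascPochhammer_eval_add, sum_div]
  refine sum_congr rfl fun ij hij => ?_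
  rw [HasAntidiagonal.mem_antidiagonal] at hij
  have := (ascPochhammer_pos ij.1 A hA).ne'
  have := (ascPochhammer_pos ij.2 B hB).ne'
  have := (ascPochhammer_pos n (A + B) (add_pos hA hB)).ne'
  rw [hij]
  field_simp

end Pochhammer

theorem Real.Gamma_add_nat {a : ℝ} (ha : ∀ k : ℕ, a + k ≠ 0) (n : ℕ) :
    Real.Gamma (a + n) = (ascPochhammer ℝ n).eval a * Real.Gamma a := by
  induction n with
  | zero => simp
  | succ n ih =>
    rw [Nat.cast_succ, ← add_assoc, Real.Gamma_add_one (ha n), ih, ascPochhammer_succ_eval]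
    ring

section MomentDeterminacy

variable {μ ν : Measure ℝ} {a b : ℝ}

theorem integrable_of_ae_mem_Icc [IsFiniteMeasure μ] (hμ : ∀ᵐ x ∂μ, x ∈ Icc a b) {f : ℝ → ℝ}
    (hf : ContinuousOn f (Icc a b)) : Integrable f μ := by
  rw [← Measure.restrict_eq_self_of_ae_mem hμ]
  exact hf.integrableOn_compact isCompact_Icc

theorem integral_eval_eq_of_integral_pow_eq [IsFiniteMeasure μ] [IsFiniteMeasure ν]
    (hμ : ∀ᵐ x ∂μ, x ∈ Icc a b) (hν : ∀ᵐ x ∂ν, x ∈ Icc a b)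
    (h : ∀ n : ℕ, ∫ x, x ^ n ∂μ = ∫ x, x ^ n ∂ν) (p : ℝ[X]) :
    ∫ x, p.eval x ∂μ = ∫ x, p.eval x ∂ν := by
  have hint : ∀ ρ : Measure ℝ, [IsFiniteMeasure ρ] → (∀ᵐ x ∂ρ, x ∈ Icc a b) → ∀ i : ℕ,
      Integrable (fun x => p.coeff i * x ^ i) ρ := fun ρ _ hρ i =>
    integrable_of_ae_mem_Icc hρ (by fun_prop)
  simp only [eval_eq_sum_range]
  rw [integral_finsetSum _ fun i _ => hint μ hμ i, integral_finsetSum _ fun i _ => hint ν hν i]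
  simp only [integral_const_mul, h]

theorem ext_of_integral_pow_eq [IsFiniteMeasure μ] [IsFiniteMeasure ν]
    (hμ : ∀ᵐ x ∂μ, x ∈ Icc a b) (hν : ∀ᵐ x ∂ν, x ∈ Icc a b)
    (h : ∀ n : ℕ, ∫ x, x ^ n ∂μ = ∫ x, x ^ n ∂ν) : μ = ν := by
  refine ext_of_forall_integral_eq_of_IsFiniteMeasure fun f => eq_of_forall_dist_le fun ε hε => ?_
  set M := μ.real univ + ν.real univ
  obtain ⟨p, hp⟩ := exists_polynomial_near_of_continuousOn a b f f.continuous.continuousOn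
    (ε / (M + 1)) (by positivity)
  have approx : ∀ ρ : Measure ℝ, [IsFiniteMeasure ρ] → (∀ᵐ x ∂ρ, x ∈ Icc a b) →
      |∫ x, f x ∂ρ - ∫ x, p.eval x ∂ρ| ≤ ε / (M + 1) * ρ.real univ := fun ρ _ hρ => by
    rw [← integral_sub (integrable_of_ae_mem_Icc hρ (f := fun x => f x) f.continuous.continuousOn)
      (integrable_of_ae_mem_Icc hρ p.continuousOn), ← Real.norm_eq_abs]
    refine norm_integral_le_of_norm_le_const (hρ.mono fun x hx => ?_)
    rw [Real.norm_eq_abs, abs_sub_comm]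
    exact (hp x hx).le
  calc dist (∫ x, f x ∂μ) (∫ x, f x ∂ν)
      = |(∫ x, f x ∂μ - ∫ x, p.eval x ∂μ) - (∫ x, f x ∂ν - ∫ x, p.eval x ∂ν)| := by
        rw [Real.dist_eq, integral_eval_eq_of_integral_pow_eq hμ hν h p, sub_sub_sub_cancel_right]
    _ ≤ ε / (M + 1) * μ.real univ + ε / (M + 1) * ν.real univ :=
        (abs_sub _ _).trans (add_le_add (approx μ hμ) (approx ν hν))
    _ ≤ ε := by
        have hM : 0 ≤ M := by positivity
        rw [← mul_add, div_mul_eq_mul_div, div_le_iff₀ (by positivity)]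
        nlinarith

end MomentDeterminacy

section ConvexCombination

open Finset

variable {μ₁ μ₂ μ₃ : Measure ℝ}

theorem ae_convexCombination_mem {s : Set ℝ} (hs : Convex ℝ s) (h₁ : ∀ᵐ x ∂μ₁, x ∈ s)
    (h₂ : ∀ᵐ y ∂μ₂, y ∈ s) (h₃ : ∀ᵐ t ∂μ₃, t ∈ Set.Icc 0 1) :
    ∀ᵐ p ∂μ₁.prod (μ₂.prod μ₃), p.2.2 * p.1 + (1 - p.2.2) * p.2.1 ∈ s := by
  filter_upwards [Measure.quasiMeasurePreserving_fst.ae h₁,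
    Measure.quasiMeasurePreserving_snd.ae (Measure.quasiMeasurePreserving_fst.ae h₂),
    Measure.quasiMeasurePreserving_snd.ae (Measure.quasiMeasurePreserving_snd.ae h₃)]
    with p hx hy ht
  exact hs hx hy ht.1 (sub_nonneg.2 ht.2) (add_sub_cancel _ _)

theorem integral_convexCombination_pow [SFinite μ₁] [SFinite μ₂] [SFinite μ₃]
    (h₁ : ∀ i : ℕ, Integrable (fun x => x ^ i) μ₁)
    (h₂ : ∀ j : ℕ, Integrable (fun y => y ^ j) μ₂)
    (h₃ : ∀ i j : ℕ, Integrable (fun t => t ^ i * (1 - t) ^ j) μ₃) (n : ℕ) :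
    ∫ p, (p.2.2 * p.1 + (1 - p.2.2) * p.2.1) ^ n ∂μ₁.prod (μ₂.prod μ₃) =
      ∑ ij ∈ antidiagonal n, n.choose ij.1 * ((∫ x, x ^ ij.1 ∂μ₁) *
        ((∫ y, y ^ ij.2 ∂μ₂) * ∫ t, t ^ ij.1 * (1 - t) ^ ij.2 ∂μ₃)) := by
  have expand : ∀ p : ℝ × ℝ × ℝ, (p.2.2 * p.1 + (1 - p.2.2) * p.2.1) ^ n =
      ∑ ij ∈ antidiagonal n, n.choose ij.1 *
        (p.1 ^ ij.1 * (p.2.1 ^ ij.2 * (p.2.2 ^ ij.1 * (1 - p.2.2) ^ ij.2))) := fun p => by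
    rw [(Commute.all _ _).add_pow']
    refine sum_congr rfl fun ij _ => ?_
    rw [nsmul_eq_mul, mul_pow, mul_pow]
    ring
  simp only [expand]
  rw [integral_finsetSum _ fun ij _ => ((h₁ _).mul_prod ((h₂ _).mul_prod (h₃ _ _))).const_mul _]
  refine sum_congr rfl fun ij _ => ?_
  rw [integral_const_mul, integral_prod_mul (fun x => x ^ ij.1)
    (fun q : ℝ × ℝ => q.1 ^ ij.2 * (q.2 ^ ij.1 * (1 - q.2) ^ ij.2)),
    integral_prod_mul (fun y => y ^ ij.2) (fun t => t ^ ij.1 * (1 - t) ^ ij.2)]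

end ConvexCombination

namespace ProbabilityTheory

variable {a b : ℝ}

theorem measurable_betaPDF (a b : ℝ) : Measurable (betaPDF a b) :=
  (measurable_betaPDFReal a b).ennreal_ofReal

theorem ae_mem_Icc_betaMeasure (a b : ℝ) : ∀ᵐ x ∂betaMeasure a b, x ∈ Icc 0 1 := by
  refine (ae_withDensity_iff (measurable_betaPDF a b)).2 (ae_of_all _ fun x hx => ?_)
  by_contra hx'
  rw [mem_Icc, not_and_or, not_le, not_le] at hx'
  exact hx (hx'.elim (fun h => betaPDF_eq_zero_of_nonpos h.le)
    fun h => betaPDF_eq_zero_of_one_le h.le)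

theorem integrable_betaMeasure (ha : 0 < a) (hb : 0 < b) {f : ℝ → ℝ}
    (hf : ContinuousOn f (Icc 0 1)) : Integrable f (betaMeasure a b) :=
  have := isProbabilityMeasureBeta ha hb
  integrable_of_ae_mem_Icc (ae_mem_Icc_betaMeasure a b) hf

theorem beta_add_nat_div_beta (ha : 0 < a) (hb : 0 < b) (k m : ℕ) :
    beta (a + k) (b + m) / beta a b = (ascPochhammer ℝ k).eval a * (ascPochhammer ℝ m).eval b /
      (ascPochhammer ℝ (k + m)).eval (a + b) := by
  have hpos {c : ℝ} (hc : 0 < c) (k : ℕ) : c + k ≠ 0 := by positivity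
  have hab := add_pos ha hb
  have := (Real.Gamma_pos_of_pos ha).ne'
  have := (Real.Gamma_pos_of_pos hb).ne'
  have := (Real.Gamma_pos_of_pos hab).ne'
  have := (ascPochhammer_pos (k + m) _ hab).ne'
  rw [beta, beta, show a + k + (b + m) = a + b + (k + m : ℕ) by push_cast; ring,
    Real.Gamma_add_nat (hpos ha), Real.Gamma_add_nat (hpos hb), Real.Gamma_add_nat (hpos hab)]
  field_simp

theorem betaPDF_mul_pow_mul_one_sub_pow (ha : 0 < a) (hb : 0 < b) (k m : ℕ) (x : ℝ) :
    betaPDF a b x * ENNReal.ofReal (x ^ k * (1 - x) ^ m) =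
      ENNReal.ofReal (beta (a + k) (b + m) / beta a b) * betaPDF (a + k) (b + m) x := by
  by_cases hx : 0 < x ∧ x < 1
  · obtain ⟨hx0, hx1⟩ := hx
    have h1x : 0 < 1 - x := sub_pos.2 hx1
    have := beta_pos ha hb
    have := beta_pos (α := a + k) (β := b + m) (by positivity) (by positivity)
    rw [betaPDF_of_pos_lt_one hx0 hx1, betaPDF_of_pos_lt_one hx0 hx1,
      ← ENNReal.ofReal_mul' (by positivity), ← ENNReal.ofReal_mul (by positivity),
      add_sub_right_comm a, add_sub_right_comm b, Real.rpow_add_natCast hx0.ne',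
      Real.rpow_add_natCast h1x.ne']
    congr 1
    field_simp
  · simp [betaPDF_eq, hx]

theorem lintegral_pow_mul_one_sub_pow_betaMeasure (ha : 0 < a) (hb : 0 < b) (k m : ℕ) :
    ∫⁻ x, ENNReal.ofReal (x ^ k * (1 - x) ^ m) ∂betaMeasure a b =
      ENNReal.ofReal (beta (a + k) (b + m) / beta a b) := by
  rw [betaMeasure, lintegral_withDensity_eq_lintegral_mul _
    (measurable_betaPDF a b) (by fun_prop)]
  simp only [Pi.mul_apply, betaPDF_mul_pow_mul_one_sub_pow ha hb]
  rw [lintegral_const_mul _ (measurable_betaPDF _ _),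
    lintegral_betaPDF_eq_one (by positivity) (by positivity), mul_one]

theorem integral_pow_mul_one_sub_pow_betaMeasure (ha : 0 < a) (hb : 0 < b) (k m : ℕ) :
    ∫ x, x ^ k * (1 - x) ^ m ∂betaMeasure a b =
      (ascPochhammer ℝ k).eval a * (ascPochhammer ℝ m).eval b /
        (ascPochhammer ℝ (k + m)).eval (a + b) := by
  have hnonneg : 0 ≤ᵐ[betaMeasure a b] fun x => x ^ k * (1 - x) ^ m :=
    (ae_mem_Icc_betaMeasure a b).mono fun x hx =>
      mul_nonneg (pow_nonneg hx.1 k) (pow_nonneg (sub_nonneg.2 hx.2) m)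
  rw [integral_eq_lintegral_of_nonneg_ae hnonneg (by fun_prop),
    lintegral_pow_mul_one_sub_pow_betaMeasure ha hb, ENNReal.toReal_ofReal
    (div_pos (beta_pos (by positivity) (by positivity)) (beta_pos ha hb)).le,
    beta_add_nat_div_beta ha hb]

theorem integral_pow_betaMeasure (ha : 0 < a) (hb : 0 < b) (k : ℕ) :
    ∫ x, x ^ k ∂betaMeasure a b =
      (ascPochhammer ℝ k).eval a / (ascPochhammer ℝ k).eval (a + b) := by
  simpa using integral_pow_mul_one_sub_pow_betaMeasure ha hb k 0

end ProbabilityTheory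

theorem betaMeasure_eq_probabilityTheory_betaMeasure (a b : ℝ) :
    betaMeasure a b = ProbabilityTheory.betaMeasure a b := by
  refine congrArg volume.withDensity (funext fun x => ?_)
  rw [ProbabilityTheory.betaPDF_eq, indicator_apply, ← ENNReal.ofReal_zero, ← apply_ite]
  congr 1
  simp only [mem_Ioo, ProbabilityTheory.beta, one_div_div]
  split_ifs <;> ring

/-- If `η₁ ~ Beta(a₁,a₂)`, `η₂ ~ Beta(b₁,b₂)`, `η₃ ~ Beta(a₁+a₂, b₁+b₂)` are independent,
then `π = η₃η₁ + (1-η₃)η₂ ~ Beta(a₁+b₁, a₂+b₂)`. -/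
theorem beta_convex_combination (a₁ a₂ b₁ b₂ : ℝ)
    (ha₁ : 0 < a₁) (ha₂ : 0 < a₂) (hb₁ : 0 < b₁) (hb₂ : 0 < b₂) :
    Measure.map (fun p : ℝ × ℝ × ℝ => p.2.2 * p.1 + (1 - p.2.2) * p.2.1)
        ((betaMeasure a₁ a₂).prod ((betaMeasure b₁ b₂).prod (betaMeasure (a₁ + a₂) (b₁ + b₂))))
      = betaMeasure (a₁ + b₁) (a₂ + b₂) := by
  open ProbabilityTheory in
  simp only [betaMeasure_eq_probabilityTheory_betaMeasure]
  have ha := add_pos ha₁ ha₂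
  have hb := add_pos hb₁ hb₂
  have := isProbabilityMeasureBeta ha₁ ha₂
  have := isProbabilityMeasureBeta hb₁ hb₂
  have := isProbabilityMeasureBeta ha hb
  have := isProbabilityMeasureBeta (add_pos ha₁ hb₁) (add_pos ha₂ hb₂)
  have hT : Measurable fun p : ℝ × ℝ × ℝ => p.2.2 * p.1 + (1 - p.2.2) * p.2.1 := by fun_prop
  refine ext_of_integral_pow_eq ((ae_map_iff hT.aemeasurable measurableSet_Icc).2
    (ae_convexCombination_mem (convex_Icc 0 1) (ae_mem_Icc_betaMeasure _ _)
      (ae_mem_Icc_betaMeasure _ _) (ae_mem_Icc_betaMeasure _ _)))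
    (ae_mem_Icc_betaMeasure _ _) fun n => ?_
  rw [integral_map hT.aemeasurable (by fun_prop),
    integral_convexCombination_pow (fun _ => integrable_betaMeasure ha₁ ha₂ (by fun_prop))
      (fun _ => integrable_betaMeasure hb₁ hb₂ (by fun_prop))
      (fun _ _ => integrable_betaMeasure ha hb (by fun_prop)),
    integral_pow_betaMeasure (add_pos ha₁ hb₁) (add_pos ha₂ hb₂), add_add_add_comm]
  simp only [integral_pow_betaMeasure ha₁ ha₂, integral_pow_betaMeasure hb₁ hb₂,
    integral_pow_mul_one_sub_pow_betaMeasure ha hb]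
  exact sum_antidiagonal_choose_mul_ascPochhammer_div ha hb n
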